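/- arXiv:0906.3062 — 2 statements merged into one kernel-verified Lean document; each statement's English description precedes it below -/
import Mathlib

section
/- Let H : ℝ² → ℝ be C¹ and consider the planar vector field X(q,p) = (∂H/∂p, -∂H/∂q + F(q,p)) where F is continuous. If F(q,p) ≠ 0 at some point (q₀,p₀) with ∂H/∂p(q₀,p₀) ≠ 0, then there exists a C¹ function W of q alone, defined on a neighborhood of the solution curve through (q₀,p₀), such that the solution of the Hamiltonian system with Hamiltonian Ĥ = H - W through (q₀,p₀) coincides locally with the solution of X through (q₀,p₀). -/
/-- Partial derivative of `H : ℝ × ℝ → ℝ` in the `q` direction. -/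
noncomputable def pdq (H : ℝ × ℝ → ℝ) (x : ℝ × ℝ) : ℝ := fderiv ℝ H x (1, 0)

/-- Partial derivative of `H : ℝ × ℝ → ℝ` in the `p` direction. -/
noncomputable def pdp (H : ℝ × ℝ → ℝ) (x : ℝ × ℝ) : ℝ := fderiv ℝ H x (0, 1)

/-!
Along the trajectory, `q̇ = ∂H/∂p ≠ 0` near `t = 0`, so `t ↦ q(t)` is a local homeomorphism and
the damping force `F(γ t)` can be written as `g(q(t))` with `g` continuous. A primitive `W` of `g`
is `C¹`, and subtracting `W(q)` from `H` leaves `∂/∂p` unchanged while replacing `-∂H/∂q` by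
`-∂H/∂q + W'(q) = -∂H/∂q + F`, which is exactly the dissipative vector field along `γ`.
-/

open Filter Topology Set

theorem exists_continuous_eventually_comp_eq {X : Type*} [TopologicalSpace X]
    {q : ℝ → ℝ} {q' a : ℝ} (hq : HasStrictDerivAt q q' a) (hq' : q' ≠ 0)
    {u : ℝ → X} (hu : Continuous u) :
    ∃ g : ℝ → X, Continuous g ∧ ∀ᶠ t in 𝓝 a, g (q t) = u t := by
  set e := (hq.hasStrictFDerivAt_equiv hq').toOpenPartialHomeomorph q
  have he : (e : ℝ → ℝ) = q := (hq.hasStrictFDerivAt_equiv hq').toOpenPartialHomeomorph_coe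
  obtain ⟨δ, hδ, hball⟩ := Metric.nhds_basis_closedBall.mem_iff.1 <|
    e.open_target.mem_nhds (hq.hasStrictFDerivAt_equiv hq').image_mem_toOpenPartialHomeomorph_target
  rw [Real.closedBall_eq_Icc] at hball
  have hle : q a - δ ≤ q a + δ := by linarith
  -- Clamping to a closed interval inside the target extends `u ∘ e.symm` continuously to `ℝ`.
  refine ⟨IccExtend hle fun y => u (e.symm y),
    continuous_IccExtend_iff.2 <|
      (hu.comp_continuousOn (e.continuousOn_symm.mono hball)).comp_continuous
        continuous_subtype_val Subtype.property, ?_⟩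
  have hIcc : ∀ᶠ t in 𝓝 a, q t ∈ Icc (q a - δ) (q a + δ) :=
    hq.hasDerivAt.continuousAt (Icc_mem_nhds (by linarith) (by linarith))
  filter_upwards [hIcc, e.open_source.mem_nhds
    (hq.hasStrictFDerivAt_equiv hq').mem_toOpenPartialHomeomorph_source] with t ht hts
  rw [IccExtend_of_mem _ _ ht]
  change u (e.symm (q t)) = u t
  rw [← he, e.left_inv hts]

theorem Continuous.exists_contDiff_one_hasDerivAt {E : Type*} [NormedAddCommGroup E]
    [NormedSpace ℝ E] [CompleteSpace E] {g : ℝ → E} (hg : Continuous g) :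
    ∃ W : ℝ → E, ContDiff ℝ 1 W ∧ ∀ x, HasDerivAt W (g x) x := by
  have hW : ∀ x, HasDerivAt (fun x => ∫ y in (0 : ℝ)..x, g y) (g x) x := fun x =>
    (hg.integral_hasStrictDerivAt 0 x).hasDerivAt
  refine ⟨_, contDiff_one_iff_deriv.2 ⟨fun x => (hW x).differentiableAt, ?_⟩, hW⟩
  rwa [funext fun x => (hW x).deriv]

theorem ContDiff.continuous_pdp {H : ℝ × ℝ → ℝ} (hH : ContDiff ℝ 1 H) : Continuous (pdp H) :=
  (hH.continuous_fderiv one_ne_zero).clm_apply continuous_const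

theorem fderiv_sub_comp_fst {H : ℝ × ℝ → ℝ} {W : ℝ → ℝ} {x : ℝ × ℝ} {w : ℝ}
    (hH : DifferentiableAt ℝ H x) (hW : HasDerivAt W w x.1) :
    fderiv ℝ (fun x => H x - W x.1) x = fderiv ℝ H x - w • ContinuousLinearMap.fst ℝ ℝ ℝ := by
  change fderiv ℝ (H - W ∘ Prod.fst) x = _
  rw [(hH.hasFDerivAt.sub (hW.hasFDerivAt.comp x hasFDerivAt_fst)).fderiv]
  ext <;> simp

theorem pdp_sub_comp_fst {H : ℝ × ℝ → ℝ} {W : ℝ → ℝ} {x : ℝ × ℝ} {w : ℝ}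
    (hH : DifferentiableAt ℝ H x) (hW : HasDerivAt W w x.1) :
    pdp (fun x => H x - W x.1) x = pdp H x := by
  simp [pdp, fderiv_sub_comp_fst hH hW]

theorem pdq_sub_comp_fst {H : ℝ × ℝ → ℝ} {W : ℝ → ℝ} {x : ℝ × ℝ} {w : ℝ}
    (hH : DifferentiableAt ℝ H x) (hW : HasDerivAt W w x.1) :
    pdq (fun x => H x - W x.1) x = pdq H x - w := by
  simp [pdq, fderiv_sub_comp_fst hH hW]

theorem stmt_2_general (H : ℝ × ℝ → ℝ) (hH : ContDiff ℝ 1 H)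
    (F : ℝ × ℝ → ℝ) (hF : Continuous F)
    (q₀ p₀ : ℝ) (γ : ℝ → ℝ × ℝ) (hγ0 : γ 0 = (q₀, p₀))
    (hγ : ∀ t, HasDerivAt γ (pdp H (γ t), -pdq H (γ t) + F (γ t)) t)
    (hHp0 : pdp H (q₀, p₀) ≠ 0) :
    ∃ ε > 0, ∃ W : ℝ → ℝ, ContDiff ℝ 1 W ∧
      ∀ t : ℝ, |t| < ε →
        HasDerivAt γ
          (pdp (fun x => H x - W x.1) (γ t), -pdq (fun x => H x - W x.1) (γ t)) t := by
  have hγc : Continuous γ := continuous_iff_continuousAt.2 fun t => (hγ t).continuousAt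
  have hq : ∀ t, HasDerivAt (fun s => (γ s).1) (pdp H (γ t)) t := fun t =>
    hasFDerivAt_fst.comp_hasDerivAt (f := γ) t (hγ t)
  have hq_strict : HasStrictDerivAt (fun s => (γ s).1) (pdp H (γ 0)) 0 :=
    hasStrictDerivAt_of_hasDerivAt_of_continuousAt (.of_forall hq)
      (hH.continuous_pdp.comp hγc).continuousAt
  obtain ⟨g, hg, hgq⟩ :=
    exists_continuous_eventually_comp_eq hq_strict (by rwa [hγ0]) (hF.comp hγc)
  obtain ⟨W, hW, hW'⟩ := hg.exists_contDiff_one_hasDerivAt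
  obtain ⟨ε, hε, hgqε⟩ := Metric.eventually_nhds_iff.1 hgq
  refine ⟨ε, hε, W, hW, fun t ht => ?_⟩
  have hgt : g (γ t).1 = F (γ t) := hgqε (by simpa [Real.dist_eq] using ht)
  have hWt : HasDerivAt W (F (γ t)) (γ t).1 := hgt ▸ hW' (γ t).1
  have hHt := (hH.differentiable one_ne_zero) (γ t)
  rw [pdp_sub_comp_fst hHt hWt, pdq_sub_comp_fst hHt hWt, neg_sub, sub_eq_neg_add]
  exact hγ t

theorem stmt_2 (H : ℝ × ℝ → ℝ) (hH : ContDiff ℝ 1 H)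
    (F : ℝ × ℝ → ℝ) (hF : Continuous F)
    (q₀ p₀ : ℝ) (γ : ℝ → ℝ × ℝ) (hγ0 : γ 0 = (q₀, p₀))
    (hγ : ∀ t, HasDerivAt γ (pdp H (γ t), -pdq H (γ t) + F (γ t)) t)
    (hF0 : F (q₀, p₀) ≠ 0) (hHp0 : pdp H (q₀, p₀) ≠ 0) :
    ∃ ε > 0, ∃ W : ℝ → ℝ, ContDiff ℝ 1 W ∧
      ∀ t : ℝ, |t| < ε →
        HasDerivAt γ
          (pdp (fun x => H x - W x.1) (γ t), -pdq (fun x => H x - W x.1) (γ t)) t :=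
  stmt_2_general H hH F hF q₀ p₀ γ hγ0 hγ hHp0
end

section
/- In the setting of the previous construction, the conservative system x'' + kx + ϱ(x) = 0 with ϱ(x) = c·q'(q^{-1}(x)) has conserved energy Ĥ(x, x') = (1/2)(x')^2 + (1/2) k x^2 + ∫_{q₀}^{x} ϱ(s) ds, and the value of Ĥ along the common solution q(t) equals the total energy of the damped system (mechanical energy plus cumulative work dissipated) up to the additive constant -W(q₀). -/
open Set intervalIntegral

/-!
Along the monotone solution `q`, substituting `x = q s` in `W (q t) = ∫_{q 0}^{q t} ϱ` and using
`ϱ (q s) = c q'(s)` gives `W (q t) = c ∫_0^t q'²`, the work dissipated up to time `t`; monotonicity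
of `q` makes the substitution valid without any regularity of `ϱ`. So `Ehat` agrees on `I` with the
total energy of the damped system, which is conserved since its derivative is
`q' (q'' + c q' + k q) = 0`.
-/

theorem integral_comp_mul_deriv_of_monotoneOn_or_antitoneOn {f g : ℝ → ℝ} {a b : ℝ}
    (hf : Differentiable ℝ f) (hmono : MonotoneOn f (uIcc a b) ∨ AntitoneOn f (uIcc a b)) :
    ∫ x in a..b, g (f x) * deriv f x = ∫ u in f a..f b, g u := by
  have hsub : Ioo (min a b) (max a b) ⊆ uIcc a b := Ioo_subset_Icc_self
  have hderiv : ∀ x ∈ Ioo (min a b) (max a b), HasDerivAt f (deriv f x) x :=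
    fun x _ => (hf x).hasDerivAt
  rcases hmono with h | h
  · refine integral_comp_mul_deriv_of_deriv_nonneg hf.continuous.continuousOn hderiv
      fun x hx => ?_
    rw [← derivWithin_of_isOpen isOpen_Ioo hx]
    exact (h.mono hsub).derivWithin_nonneg
  · refine integral_comp_mul_deriv_of_deriv_nonpos hf.continuous.continuousOn hderiv
      fun x hx => ?_
    rw [← derivWithin_of_isOpen isOpen_Ioo hx]
    exact (h.mono hsub).derivWithin_nonpos

theorem integral_eq_mul_integral_deriv_sq {f g : ℝ → ℝ} {a b c : ℝ}
    (hf : Differentiable ℝ f) (hmono : MonotoneOn f (uIcc a b) ∨ AntitoneOn f (uIcc a b))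
    (hg : ∀ x ∈ uIcc a b, g (f x) = c * deriv f x) :
    ∫ u in f a..f b, g u = c * ∫ x in a..b, deriv f x ^ 2 := by
  rw [← integral_comp_mul_deriv_of_monotoneOn_or_antitoneOn hf hmono, ← integral_const_mul]
  refine integral_congr fun x hx => ?_
  rw [hg x hx]
  ring

theorem damped_energy_eq {c k : ℝ} {q : ℝ → ℝ} (hq : Differentiable ℝ q)
    (hq' : Differentiable ℝ (deriv q))
    (hode : ∀ t, deriv (deriv q) t + c * deriv q t + k * q t = 0) (t : ℝ) :
    (1/2) * deriv q t ^ 2 + (1/2) * k * q t ^ 2 + c * ∫ s in (0:ℝ)..t, deriv q s ^ 2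
      = (1/2) * deriv q 0 ^ 2 + (1/2) * k * q 0 ^ 2 := by
  have hcont : Continuous fun s => deriv q s ^ 2 := hq'.continuous.pow 2
  have hE : ∀ u, HasDerivAt (fun u =>
      (1/2) * deriv q u ^ 2 + (1/2) * k * q u ^ 2 + c * ∫ s in (0:ℝ)..u, deriv q s ^ 2) 0 u := by
    intro u
    have hdiss : HasDerivAt (fun u => ∫ s in (0:ℝ)..u, deriv q s ^ 2) (deriv q u ^ 2) u :=
      integral_hasDerivAt_right (hcont.intervalIntegrable 0 u)
        (hcont.stronglyMeasurableAtFilter _ _) hcont.continuousAt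
    refine ((((hq' u).hasDerivAt.fun_pow 2).const_mul (1/2 : ℝ)).fun_add
      (((hq u).hasDerivAt.fun_pow 2).const_mul ((1/2) * k))).fun_add
      (hdiss.const_mul c) |>.congr_deriv ?_
    push_cast
    linear_combination (deriv q u) * hode u
  simpa using is_const_of_deriv_eq_zero (fun x => (hE x).differentiableAt)
    (fun x => (hE x).deriv) t 0

/-- The substituting conservative system has conserved energy
`Ĥ(x,x') = ½(x')² + ½kx² + ∫_{q₀}^x ϱ`, and along the common solution `q` its value
equals the total energy (mechanical plus dissipated work) of the damped system,
up to the additive constant `-W(q₀) = 0`. -/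
theorem stmt_8 (c k : ℝ) (q : ℝ → ℝ) (hq : ContDiff ℝ 2 q)
    (hode : ∀ t, deriv (deriv q) t + c * deriv q t + k * q t = 0)
    (q₀ : ℝ) (hq0 : q 0 = q₀)
    (I : Set ℝ) (hI : I.OrdConnected) (h0I : (0:ℝ) ∈ I)
    (hmono : StrictMonoOn q I ∨ StrictAntiOn q I)
    (ϱ W Ehat Etot : ℝ → ℝ)
    (hϱ : ∀ x ∈ q '' I, ϱ x = c * deriv q (Function.invFunOn q I x))
    (hW : ∀ x, W x = ∫ s in q₀..x, ϱ s)
    (hEhat : ∀ t, Ehat t = (1/2) * (deriv q t)^2 + (1/2) * k * (q t)^2 + W (q t))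
    (hEtot : ∀ t, Etot t = (1/2) * (deriv q t)^2 + (1/2) * k * (q t)^2
        + c * ∫ s in (0:ℝ)..t, (deriv q s)^2) :
    (∀ t ∈ I, Ehat t = Ehat 0) ∧ (∀ t ∈ I, Ehat t = Etot t - W q₀) := by
  subst hq0
  have hdq : Differentiable ℝ q := hq.differentiable two_ne_zero
  have hdq' : Differentiable ℝ (deriv q) :=
    (ContDiff.deriv' (n := 1) hq).differentiable one_ne_zero
  have hinj : InjOn q I := hmono.elim StrictMonoOn.injOn StrictAntiOn.injOn
  have hWq : ∀ t ∈ I, W (q t) = c * ∫ s in (0:ℝ)..t, deriv q s ^ 2 := by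
    intro t ht
    have hsub : uIcc 0 t ⊆ I := hI.uIcc_subset h0I ht
    rw [hW]
    refine integral_eq_mul_integral_deriv_sq hdq
      (hmono.imp (·.monotoneOn.mono hsub) (·.antitoneOn.mono hsub)) fun s hs => ?_
    rw [hϱ _ (mem_image_of_mem q (hsub hs)), hinj.leftInvOn_invFunOn (hsub hs)]
  have hEq : ∀ t ∈ I, Ehat t = Etot t := fun t ht => by rw [hEhat, hEtot, hWq t ht]
  have hconst : ∀ t, Etot t = Etot 0 := fun t => by
    rw [hEtot, hEtot, damped_energy_eq hdq hdq' hode, integral_same, mul_zero, add_zero]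
  have hW0 : W (q 0) = 0 := by rw [hW, integral_same]
  exact ⟨fun t ht => by rw [hEq t ht, hconst t, ← hEq 0 h0I],
    fun t ht => by rw [hEq t ht, hW0, sub_zero]⟩
end
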